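/- arXiv:1808.00189 — 2 statements merged into one kernel-verified Lean document; each statement's English description precedes it below -/
import Mathlib

section
/- If Ψ_j = ∅ for all j (full cooperation / CoMP), then the maximum integer J for which there exist nonempty pairwise disjoint subsets Λ_1,...,Λ_J of a set of size N_2 satisfying |Ψ_j| + Σ_{i≠j}|Λ_i| < M for all j equals min(M, N_2). -/
/-! With full cooperation the `j`-th constraint reads `∑_{i ≠ j} |Λ_i| < M`. Each `Λ_i` is
nonempty, so this sum is at least `J - 1`, giving `J ≤ M`; disjointness gives `J ≤ N₂`.
Conversely, `J = min M N₂` singletons `Λ_j = {j}` make every such sum equal to `J - 1 < M`. -/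

open Finset Function

theorem Fintype.card_le_of_pairwise_disjoint_nonempty {ι α : Type*} [Fintype ι] [Fintype α]
    (Λ : ι → Finset α) (hne : ∀ i, (Λ i).Nonempty) (hdisj : Pairwise (Disjoint on Λ)) :
    Fintype.card ι ≤ Fintype.card α := by
  choose x hx using hne
  refine Fintype.card_le_of_injective x fun i j hij => ?_
  by_contra hij'
  exact disjoint_left.mp (hdisj hij') (hx i) (hij ▸ hx j)

theorem card_sub_one_le_sum_card_sdiff_singleton {ι α : Type*} [Fintype ι] [DecidableEq ι]
    (Λ : ι → Finset α) (hne : ∀ i, (Λ i).Nonempty) (j : ι) :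
    Fintype.card ι - 1 ≤ ∑ i ∈ univ \ {j}, #(Λ i) := by
  simpa [card_univ_sdiff] using card_nsmul_le_sum (univ \ {j}) (fun i => #(Λ i)) 1
    fun i _ => card_pos.mpr (hne i)

theorem sum_card_singleton_castLE_sdiff {J N : ℕ} (h : J ≤ N) (j : Fin J) :
    ∑ i ∈ univ \ {j}, #({Fin.castLE h i} : Finset (Fin N)) = J - 1 := by
  simp [card_univ_sdiff]

theorem dof_comp (M N₂ : ℕ) :
    IsGreatest {J : ℕ | ∃ Λ : Fin J → Finset (Fin N₂),
      (∀ j, (Λ j).Nonempty) ∧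
      (∀ i j, i ≠ j → Disjoint (Λ i) (Λ j)) ∧
      (∀ j, 0 + ∑ i ∈ Finset.univ \ {j}, (Λ i).card < M)}
      (min M N₂) := by
  constructor
  · have hN : min M N₂ ≤ N₂ := min_le_right M N₂
    refine ⟨fun j => {Fin.castLE hN j}, fun _ => singleton_nonempty _,
      fun i j hij => disjoint_singleton.mpr ((Fin.castLE_injective hN).ne hij), fun j => ?_⟩
    have hjM : j.val < M := j.is_lt.trans_le (min_le_left M N₂)
    rw [sum_card_singleton_castLE_sdiff]
    omega
  · rintro J ⟨Λ, hne, hdisj, hsum⟩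
    refine le_min ?_ ?_
    · obtain rfl | hJ := J.eq_zero_or_pos
      · exact M.zero_le
      · have hlow := card_sub_one_le_sum_card_sdiff_singleton Λ hne ⟨0, hJ⟩
        have hlt := hsum ⟨0, hJ⟩
        rw [Fintype.card_fin] at hlow
        omega
    · simpa using Fintype.card_le_of_pairwise_disjoint_nonempty Λ hne hdisj
end

section
/- For nonempty pairwise disjoint finite sets Λ_1,...,Λ_J and finite sets Ψ_1,...,Ψ_J, the conditions |Ψ_j| + Σ_{i≠j}|Λ_i| < M for all j = 1,...,J imply J ≤ min(M, Σ_j |Λ_j|); in particular the achievable DoF J is at most min(M, N_2) when ⋃_j Λ_j is contained in a set of size N_2. -/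
open Finset

namespace Finset

variable {ι α : Type*}

theorem card_le_sum_card_of_nonempty (s : Finset ι) {t : ι → Finset α}
    (ht : ∀ i ∈ s, (t i).Nonempty) : #s ≤ ∑ i ∈ s, #(t i) := by
  simpa using s.card_nsmul_le_sum (fun i ↦ #(t i)) 1 fun i hi ↦ (ht i hi).card_pos

theorem sum_card_le_card_of_pairwise_disjoint [Fintype α] [Fintype ι] {t : ι → Finset α}
    (ht : Pairwise fun i j ↦ Disjoint (t i) (t j)) : ∑ i, #(t i) ≤ Fintype.card α := by
  classical
  calc ∑ i, #(t i) = #(univ.biUnion t) :=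
        (card_biUnion fun i _ j _ hij ↦ ht hij).symm
    _ ≤ Fintype.card α := card_le_univ _

theorem card_le_of_forall_add_sum_card_sdiff_lt [Fintype ι] [DecidableEq ι] {t : ι → Finset α}
    (ht : ∀ i, (t i).Nonempty) (c : ι → ℕ) {M : ℕ}
    (hM : ∀ j, c j + ∑ i ∈ univ \ {j}, #(t i) < M) : Fintype.card ι ≤ M := by
  cases isEmpty_or_nonempty ι with
  | inl _ => simp
  | inr hι =>
    obtain ⟨j⟩ := hι
    have hothers : Fintype.card ι - 1 ≤ ∑ i ∈ univ \ {j}, #(t i) := by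
      simpa [card_sdiff_of_subset] using
        card_le_sum_card_of_nonempty (univ \ {j}) fun i _ ↦ ht i
    have hbudget := hM j
    omega

end Finset

theorem dof_upper_bound_general (M N₂ J : ℕ)
    (Λ : Fin J → Finset (Fin N₂))
    (Ψ : Fin J → Finset ℕ)
    (hΛne : ∀ j, (Λ j).Nonempty)
    (hΛdisj : ∀ i j, i ≠ j → Disjoint (Λ i) (Λ j))
    (hcond : ∀ j, (Ψ j).card + ∑ i ∈ Finset.univ \ {j}, (Λ i).card < M) :
    J ≤ min M (∑ j, (Λ j).card) ∧ J ≤ min M N₂ := by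
  have hJM : J ≤ M := by
    simpa using card_le_of_forall_add_sum_card_sdiff_lt hΛne (fun j ↦ #(Ψ j)) hcond
  have hJΛ : J ≤ ∑ j, #(Λ j) := by
    simpa using card_le_sum_card_of_nonempty univ fun j _ ↦ hΛne j
  have hΛN : ∑ j, #(Λ j) ≤ N₂ := by
    simpa using sum_card_le_card_of_pairwise_disjoint fun i j hij ↦ hΛdisj i j hij
  exact ⟨le_min hJM hJΛ, le_min hJM (hJΛ.trans hΛN)⟩

theorem dof_upper_bound (M N₂ J : ℕ) (hM : 1 ≤ M)
    (Λ : Fin J → Finset (Fin N₂))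
    (Ψ : Fin J → Finset ℕ)
    (hΛne : ∀ j, (Λ j).Nonempty)
    (hΛdisj : ∀ i j, i ≠ j → Disjoint (Λ i) (Λ j))
    (hcond : ∀ j, (Ψ j).card + ∑ i ∈ Finset.univ \ {j}, (Λ i).card < M) :
    J ≤ min M (∑ j, (Λ j).card) ∧ J ≤ min M N₂ :=
  dof_upper_bound_general M N₂ J Λ Ψ hΛne hΛdisj hcond
end
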